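/- arXiv:0709.0311 — 2 statements merged into one kernel-verified Lean document; each statement's English description precedes it below -/
import Mathlib

section
/- Let A be an (n+1)×(n+1) orthogonal-type block matrix of the form diag(1, A*) where A* ∈ O(n) has finite order at most k and A ≠ I. Then ‖A − I‖ ≥ 2 sin(π/k). -/
/-!
Over `ℂ`, a matrix `A ≠ 1` with `A ^ k' = 1` has an eigenvalue `ζ ≠ 1` with `ζ ^ k' = 1`:
otherwise all factors but `A - 1` of `0 = A ^ k' - 1 = (A - 1) ∏_{ζ ≠ 1} (A - ζ)` are units.
Splitting an eigenvector `z = u + i v` of `A - 1` into real and imaginary parts gives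
`‖(A - 1) u‖² + ‖(A - 1) v‖² = ‖ζ - 1‖² (‖u‖² + ‖v‖²)`, so `‖ζ - 1‖ ≤ ‖A - 1‖`.
Finally `ζ = exp (i θ)` with `2π / k ≤ 2π / k' ≤ |θ| ≤ π`, hence
`‖ζ - 1‖ = 2 sin (|θ| / 2) ≥ 2 sin (π / k)`.
-/

open Matrix
noncomputable def opNorm {m : Type*} [Fintype m] [DecidableEq m]
    (A : Matrix m m ℝ) : ℝ :=
  ‖(LinearMap.toContinuousLinearMap (Matrix.toEuclideanLin A))‖

open Real

namespace Complex

theorem exp_arg_mul_I_of_pow_eq_one {ζ : ℂ} {n : ℕ} (hζ : ζ ^ n = 1) (hn : n ≠ 0) :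
    exp (arg ζ * I) = ζ := by
  simpa [norm_eq_one_of_pow_eq_one hζ hn] using norm_mul_exp_arg_mul_I ζ

theorem two_pi_div_le_abs_arg_of_pow_eq_one {ζ : ℂ} {n : ℕ} (hζ : ζ ^ n = 1) (hne : ζ ≠ 1) :
    2 * π / n ≤ |arg ζ| := by
  rcases Nat.eq_zero_or_pos n with rfl | hn
  · simp
  have hexp := exp_arg_mul_I_of_pow_eq_one hζ hn.ne'
  obtain ⟨m, hm⟩ : ∃ m : ℤ, (n : ℂ) * (arg ζ * I) = m * (2 * π * I) := by
    rw [← exp_eq_one_iff, exp_nat_mul, hexp, hζ]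
  have harg : n * arg ζ = m * (2 * π) := by
    have : ((n * arg ζ : ℝ) : ℂ) = (m * (2 * π) : ℝ) := by
      apply mul_right_cancel₀ I_ne_zero
      push_cast
      linear_combination hm
    exact_mod_cast this
  have hm0 : m ≠ 0 := by
    rintro rfl
    have : arg ζ = 0 := by simpa [hn.ne'] using harg
    rw [this, ofReal_zero, zero_mul, exp_zero] at hexp
    exact hne hexp.symm
  have hm1 : (1 : ℝ) ≤ |(m : ℝ)| := by exact_mod_cast Int.one_le_abs hm0
  have hn' : (0 : ℝ) < n := Nat.cast_pos.mpr hn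
  rw [div_le_iff₀ hn']
  calc 2 * π ≤ |(m : ℝ)| * (2 * π) := le_mul_of_one_le_left (by positivity) hm1
    _ = |n * arg ζ| := by rw [harg, abs_mul, abs_of_pos two_pi_pos]
    _ = |arg ζ| * n := by rw [abs_mul, abs_of_pos hn', mul_comm]

theorem two_mul_sin_pi_div_le_norm_sub_one {ζ : ℂ} {n k : ℕ} (hn : 0 < n) (hnk : n ≤ k)
    (hζ : ζ ^ n = 1) (hne : ζ ≠ 1) :
    2 * Real.sin (π / k) ≤ ‖ζ - 1‖ := by
  have hk : (0 : ℝ) < k := by exact_mod_cast hn.trans_le hnk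
  have hhalf : |arg ζ / 2| ≤ π / 2 := by
    rw [abs_div, abs_two]; linarith [abs_arg_le_pi ζ]
  have hle : π / k ≤ |arg ζ / 2| := by
    have : π / k ≤ π / n :=
      div_le_div_of_nonneg_left pi_pos.le (by exact_mod_cast hn) (by exact_mod_cast hnk)
    rw [abs_div, abs_two]
    linarith [two_pi_div_le_abs_arg_of_pow_eq_one hζ hne, show 2 * π / n = 2 * (π / n) by ring]
  rw [← exp_arg_mul_I_of_pow_eq_one hζ hn.ne', mul_comm (arg ζ : ℂ), norm_exp_I_mul_ofReal_sub_one,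
    Real.norm_eq_abs, abs_mul, abs_two, abs_sin_eq_sin_abs_of_abs_le_pi (by linarith [pi_pos])]
  gcongr
  exact sin_le_sin_of_le_of_le_pi_div_two (by linarith [pi_pos, div_pos pi_pos hk]) hhalf hle

end Complex

open Polynomial in
theorem isUnit_aeval_prod_X_sub_C {R A : Type*} [CommRing R] [Ring A] [Algebra R A] (a : A)
    (s : Finset R) (h : ∀ r ∈ s, IsUnit (a - algebraMap R A r)) :
    IsUnit (aeval a (∏ r ∈ s, (X - C r))) := by
  classical
  induction s using Finset.induction with
  | empty => simp
  | insert r s hr ih =>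
    rw [Finset.prod_insert hr, map_mul, map_sub, aeval_X, aeval_C]
    exact (h r (s.mem_insert_self r)).mul (ih fun r' hr' => h r' (Finset.mem_insert_of_mem hr'))

namespace Matrix

variable {m n : Type*} [Fintype n]

open Polynomial in
theorem exists_mulVec_eq_smul_of_pow_eq_one [DecidableEq n] {B : Matrix n n ℂ} {k : ℕ}
    (hk : 0 < k) (hB : B ^ k = 1) (hne : B ≠ 1) :
    ∃ ζ : ℂ, ζ ≠ 1 ∧ ζ ^ k = 1 ∧ ∃ z ≠ 0, B *ᵥ z = ζ • z := by
  by_contra! h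
  set S := (nthRootsFinset k (1 : ℂ)).erase 1
  have hfactor : (X ^ k - 1 : ℂ[X]) = (X - C 1) * ∏ ζ ∈ S, (X - C ζ) := by
    rw [X_pow_sub_one_eq_prod hk (Complex.isPrimitiveRoot_exp k hk.ne'),
      ← Finset.mul_prod_erase _ _ (one_mem_nthRootsFinset hk)]
  have hunit : IsUnit (aeval B (∏ ζ ∈ S, (X - C ζ))) := by
    refine isUnit_aeval_prod_X_sub_C B S fun ζ hζ => ?_
    obtain ⟨hζ1, hζk⟩ := Finset.mem_erase.mp hζ
    rw [isUnit_iff_isUnit_det, isUnit_iff_ne_zero]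
    intro hdet
    obtain ⟨z, hz0, hz⟩ := exists_mulVec_eq_zero_iff.mpr hdet
    rw [sub_mulVec, Algebra.algebraMap_eq_smul_one, smul_mulVec, one_mulVec,
      sub_eq_zero] at hz
    exact h ζ hζ1 ((mem_nthRootsFinset hk _).mp hζk) z hz0 hz
  have hzero : aeval B (X ^ k - 1 : ℂ[X]) = 0 := by simp [hB]
  rw [hfactor, map_mul, hunit.mul_left_eq_zero, map_sub, aeval_X, aeval_C, map_one,
    sub_eq_zero] at hzero
  exact hne hzero

theorem mulVec_re (A : Matrix m n ℝ) (z : n → ℂ) :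
    (A *ᵥ fun i => (z i).re) = fun i => ((A.map (↑) *ᵥ z) i).re := by
  ext i
  simp [mulVec, dotProduct, Complex.re_sum]

theorem mulVec_im (A : Matrix m n ℝ) (z : n → ℂ) :
    (A *ᵥ fun i => (z i).im) = fun i => ((A.map (↑) *ᵥ z) i).im := by
  ext i
  simp [mulVec, dotProduct, Complex.im_sum]

theorem norm_le_opNorm_of_mulVec_eq_smul [DecidableEq n] (A : Matrix n n ℝ) {μ : ℂ}
    {z : n → ℂ} (hz : z ≠ 0) (h : A.map (↑) *ᵥ z = μ • z) : ‖μ‖ ≤ opNorm A := by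
  set T := LinearMap.toContinuousLinearMap (toEuclideanLin A)
  let re (w : n → ℂ) : EuclideanSpace ℝ n := WithLp.toLp 2 fun i => (w i).re
  let im (w : n → ℂ) : EuclideanSpace ℝ n := WithLp.toLp 2 fun i => (w i).im
  have hnorm (w : n → ℂ) : ‖re w‖ ^ 2 + ‖im w‖ ^ 2 = ∑ i, ‖w i‖ ^ 2 := by
    rw [EuclideanSpace.real_norm_sq_eq, EuclideanSpace.real_norm_sq_eq, ← Finset.sum_add_distrib]
    congr with i
    rw [Complex.sq_norm, Complex.normSq_apply]
    ring
  have hT (x : EuclideanSpace ℝ n) : ‖T x‖ ^ 2 ≤ ‖T‖ ^ 2 * ‖x‖ ^ 2 := by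
    rw [← mul_pow]
    exact pow_le_pow_left₀ (norm_nonneg _) (T.le_opNorm x) 2
  have hpos : 0 < ∑ i, ‖z i‖ ^ 2 := by
    obtain ⟨i, hi⟩ := Function.ne_iff.mp hz
    exact Finset.sum_pos' (fun j _ => by positivity) ⟨i, Finset.mem_univ i, by positivity⟩
  have hsq : ‖μ‖ ^ 2 * ∑ i, ‖z i‖ ^ 2 ≤ ‖T‖ ^ 2 * ∑ i, ‖z i‖ ^ 2 :=
    calc ‖μ‖ ^ 2 * ∑ i, ‖z i‖ ^ 2 = ‖T (re z)‖ ^ 2 + ‖T (im z)‖ ^ 2 := by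
          have hre : T (re z) = re (μ • z) := by
            simp [T, re, mulVec_re, h]
          have him : T (im z) = im (μ • z) := by
            simp [T, im, mulVec_im, h]
          simp [hre, him, hnorm, mul_pow, Finset.mul_sum]
      _ ≤ ‖T‖ ^ 2 * ‖re z‖ ^ 2 + ‖T‖ ^ 2 * ‖im z‖ ^ 2 := add_le_add (hT _) (hT _)
      _ = ‖T‖ ^ 2 * ∑ i, ‖z i‖ ^ 2 := by rw [← mul_add, hnorm]
  exact (pow_le_pow_iff_left₀ (norm_nonneg _) (norm_nonneg _) two_ne_zero).mp
    (le_of_mul_le_mul_right hsq hpos)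

end Matrix

theorem stmt_3_general (n k : ℕ)
    (A : Matrix (Fin 1 ⊕ Fin n) (Fin 1 ⊕ Fin n) ℝ)
    (hAne : A ≠ 1)
    (hord : ∃ k', 1 ≤ k' ∧ k' ≤ k ∧ A ^ k' = 1) :
    2 * Real.sin (Real.pi / k) ≤ opNorm (A - 1) := by
  obtain ⟨k', hk', hk'k, hAk⟩ := hord
  have hone : (1 : Matrix (Fin 1 ⊕ Fin n) (Fin 1 ⊕ Fin n) ℝ).map ((↑) : ℝ → ℂ) = 1 :=
    Matrix.map_one _ Complex.ofReal_zero Complex.ofReal_one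
  set B := A.map ((↑) : ℝ → ℂ)
  have hBk : B ^ k' = 1 := by
    rw [← hone, ← hAk]
    exact (Matrix.map_pow A Complex.ofRealHom k').symm
  have hBne : B ≠ 1 := fun h => hAne (map_injective Complex.ofReal_injective (h.trans hone.symm))
  obtain ⟨ζ, hζ1, hζk, z, hz0, hz⟩ := exists_mulVec_eq_smul_of_pow_eq_one hk' hBk hBne
  have hz' : (A - 1).map (↑) *ᵥ z = (ζ - 1) • z := by
    rw [Matrix.map_sub _ Complex.ofReal_sub, hone, sub_mulVec, hz, one_mulVec, sub_smul, one_smul]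
  calc 2 * Real.sin (Real.pi / k) ≤ ‖ζ - 1‖ :=
        Complex.two_mul_sin_pi_div_le_norm_sub_one hk' hk'k hζk hζ1
    _ ≤ opNorm (A - 1) := norm_le_opNorm_of_mulVec_eq_smul _ hz0 hz'

theorem stmt_3 (n k : ℕ) (hk : 1 ≤ k)
    (Astar : Matrix (Fin n) (Fin n) ℝ)
    (hO : Astarᵀ * Astar = 1)
    (A : Matrix (Fin 1 ⊕ Fin n) (Fin 1 ⊕ Fin n) ℝ)
    (hA : A = Matrix.fromBlocks 1 0 0 Astar)
    (hAne : A ≠ 1)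
    (hord : ∃ k', 1 ≤ k' ∧ k' ≤ k ∧ A ^ k' = 1) :
    2 * Real.sin (Real.pi / k) ≤ opNorm (A - 1) :=
  stmt_3_general n k A hAne hord
end

section
/- Let r > 0. If A ∈ O⁺(1,n) satisfies A(B̄(e₁,r)) ∩ B̄(e₁,r) ≠ ∅ (where B̄ denotes a closed hyperbolic ball), then every entry of A satisfies |a_{ij}| ≤ ((1+cosh r)/sinh r)·√(cosh 6r). -/
open Matrix

/-- The Lorentz form matrix `J = diag(-1, 1, …, 1)`. -/
noncomputable def Jmat (n : ℕ) : Matrix (Fin (n+1)) (Fin (n+1)) ℝ :=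
  Matrix.diagonal fun i => if i = 0 then (-1 : ℝ) else 1

/-- `A ∈ O⁺(1,n)`: `A` preserves the Lorentz form and the upper sheet. -/
def OPlus {n : ℕ} (A : Matrix (Fin (n+1)) (Fin (n+1)) ℝ) : Prop :=
  Aᵀ * Jmat n * A = Jmat n ∧ 1 ≤ A 0 0

/-- The Lorentzian pairing `x₁y₁ − x₂y₂ − ⋯ − x_{n+1}y_{n+1}`. -/
noncomputable def lprod {n : ℕ} (x y : Fin (n+1) → ℝ) : ℝ :=
  x 0 * y 0 - ∑ i ∈ Finset.univ.erase 0, x i * y i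

/-- Membership in the hyperboloid model `H^n` (upper sheet). -/
def onH {n : ℕ} (x : Fin (n+1) → ℝ) : Prop :=
  lprod x x = 1 ∧ 0 < x 0

/-- Inverse hyperbolic cosine. -/
noncomputable def arcosh (x : ℝ) : ℝ := Real.log (x + Real.sqrt (x ^ 2 - 1))

/-- Hyperbolic distance on the hyperboloid: `cosh (dH x y) = lprod x y`. -/
noncomputable def dH {n : ℕ} (x y : Fin (n+1) → ℝ) : ℝ := arcosh (lprod x y)

/-- The point `e₁ = (1, 0, …, 0)` of the hyperboloid. -/
noncomputable def e1vec (n : ℕ) : Fin (n+1) → ℝ := fun i => if i = 0 then 1 else 0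

/-- The closed hyperbolic ball of radius `r` about `e₁` in the hyperboloid. -/
noncomputable def hBall (n : ℕ) (r : ℝ) : Set (Fin (n+1) → ℝ) :=
  {x | onH x ∧ dH (e1vec n) x ≤ r}

/-- `κ(r) = ((1 + cosh r)/sinh r) √(cosh 6r)`. -/
noncomputable def kappa (r : ℝ) : ℝ :=
  ((1 + Real.cosh r) / Real.sinh r) * Real.sqrt (Real.cosh (6 * r))

/-!
Since `-lprod` is positive semidefinite on the orthogonal complement of a point of `H^n`,
Cauchy–Schwarz there gives the hyperbolic triangle inequality in the form
`lprod u w ≤ cosh (s + t)` whenever `lprod u v ≤ cosh s` and `lprod v w ≤ cosh t`.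
As `A` is an isometry of `H^n` moving some `x ∈ B̄(e₁, r)` into `B̄(e₁, r)`, it maps `B̄(e₁, r)`
into `B̄(e₁, 3r)`, and every coordinate of a point of `B̄(e₁, 3r)` is at most `cosh 3r ≤ √(cosh 6r)`.
Evaluating `A` at `e₁` bounds the first column; evaluating it at `cosh r • e₁ + sinh r • e_j`
then bounds `sinh r * |a_ij|` by `(1 + cosh r) * cosh 3r`.
-/

open Finset Real

section LorentzForm

variable {n : ℕ}

lemma lprod_eq_neg_dotProduct_mulVec (x y : Fin (n+1) → ℝ) :
    lprod x y = -(x ⬝ᵥ Jmat n *ᵥ y) := by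
  have hJ : ∀ i ∈ univ.erase 0, x i * (Jmat n *ᵥ y) i = x i * y i := fun i hi => by
    rw [Jmat, mulVec_diagonal, if_neg (mem_erase.mp hi).1, one_mul]
  rw [lprod, dotProduct, ← add_sum_erase _ _ (mem_univ 0), sum_congr rfl hJ, Jmat,
    mulVec_diagonal, if_pos rfl]
  ring

lemma lprod_comm (x y : Fin (n+1) → ℝ) : lprod x y = lprod y x := by
  simp only [lprod, mul_comm]

@[simp]
lemma lprod_add_left (x y z : Fin (n+1) → ℝ) : lprod (x + y) z = lprod x z + lprod y z := by
  simp only [lprod_eq_neg_dotProduct_mulVec, add_dotProduct]; ring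

@[simp]
lemma lprod_add_right (x y z : Fin (n+1) → ℝ) : lprod x (y + z) = lprod x y + lprod x z := by
  simp only [lprod_eq_neg_dotProduct_mulVec, mulVec_add, dotProduct_add]; ring

@[simp]
lemma lprod_sub_left (x y z : Fin (n+1) → ℝ) : lprod (x - y) z = lprod x z - lprod y z := by
  simp only [lprod_eq_neg_dotProduct_mulVec, sub_dotProduct]; ring

@[simp]
lemma lprod_sub_right (x y z : Fin (n+1) → ℝ) : lprod x (y - z) = lprod x y - lprod x z := by
  simp only [lprod_eq_neg_dotProduct_mulVec, mulVec_sub, dotProduct_sub]; ring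

@[simp]
lemma lprod_smul_left (a : ℝ) (x y : Fin (n+1) → ℝ) : lprod (a • x) y = a * lprod x y := by
  simp only [lprod_eq_neg_dotProduct_mulVec, smul_dotProduct, smul_eq_mul]; ring

@[simp]
lemma lprod_smul_right (a : ℝ) (x y : Fin (n+1) → ℝ) : lprod x (a • y) = a * lprod x y := by
  simp only [lprod_eq_neg_dotProduct_mulVec, mulVec_smul, dotProduct_smul, smul_eq_mul]; ring

lemma lprod_single_zero_left (y : Fin (n+1) → ℝ) : lprod (Pi.single 0 1) y = y 0 := by
  simp [lprod, Pi.single_apply]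

lemma lprod_single_self {j : Fin (n+1)} (hj : j ≠ 0) :
    lprod (Pi.single j 1) (Pi.single j 1 : Fin (n+1) → ℝ) = -1 := by
  simp [lprod, Pi.single_apply, hj]

lemma e1vec_eq_single : e1vec n = Pi.single 0 1 := by
  ext i
  simp [e1vec, Pi.single_apply]

lemma lprod_e1vec (y : Fin (n+1) → ℝ) : lprod (e1vec n) y = y 0 := by
  rw [e1vec_eq_single, lprod_single_zero_left]

lemma lprod_mulVec {A : Matrix (Fin (n+1)) (Fin (n+1)) ℝ} (hA : Aᵀ * Jmat n * A = Jmat n)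
    (x y : Fin (n+1) → ℝ) : lprod (A *ᵥ x) (A *ᵥ y) = lprod x y := by
  rw [lprod_eq_neg_dotProduct_mulVec, lprod_eq_neg_dotProduct_mulVec, mulVec_mulVec,
    ← vecMul_transpose, dotProduct_mulVec, vecMul_vecMul, ← Matrix.mul_assoc, hA,
    ← dotProduct_mulVec]

end LorentzForm

lemma abs_sum_mul_le_mul_sub_one {ι : Type*} (s : Finset ι) {a b : ι → ℝ} {α β : ℝ}
    (hα : 0 ≤ α) (hβ : 0 ≤ β) (ha : ∑ i ∈ s, a i ^ 2 = α ^ 2 - 1)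
    (hb : ∑ i ∈ s, b i ^ 2 = β ^ 2 - 1) :
    |∑ i ∈ s, a i * b i| ≤ α * β - 1 := by
  have hα1 : 1 ≤ α := by nlinarith [ha ▸ sum_nonneg fun i _ => sq_nonneg (a i)]
  have hβ1 : 1 ≤ β := by nlinarith [hb ▸ sum_nonneg fun i _ => sq_nonneg (b i)]
  have hαβ : 1 ≤ α * β := one_le_mul_of_one_le_of_one_le hα1 hβ1
  apply abs_le_of_sq_le_sq _ (by linarith)
  calc (∑ i ∈ s, a i * b i) ^ 2 ≤ (α ^ 2 - 1) * (β ^ 2 - 1) :=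
        ha ▸ hb ▸ sum_mul_sq_le_sq_mul_sq s a b
    _ ≤ (α * β - 1) ^ 2 := by nlinarith [sq_nonneg (α - β)]

section Hyperboloid

variable {n : ℕ}

lemma sum_sq_erase_zero_of_onH {x : Fin (n+1) → ℝ} (hx : onH x) :
    ∑ i ∈ univ.erase 0, x i ^ 2 = x 0 ^ 2 - 1 := by
  have h := hx.1
  simp only [lprod, ← pow_two] at h
  linarith

lemma abs_apply_le_apply_zero_of_onH {y : Fin (n+1) → ℝ} (hy : onH y) (i : Fin (n+1)) :
    |y i| ≤ y 0 := by
  rcases eq_or_ne i 0 with rfl | hi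
  · exact (abs_of_pos hy.2).le
  · apply abs_le_of_sq_le_sq _ hy.2.le
    have := single_le_sum (fun k _ => sq_nonneg (y k)) (mem_erase.mpr ⟨hi, mem_univ i⟩)
    linarith [sum_sq_erase_zero_of_onH hy]

lemma one_le_lprod_of_onH {u w : Fin (n+1) → ℝ} (hu : onH u) (hw : onH w) : 1 ≤ lprod u w := by
  have := abs_sum_mul_le_mul_sub_one _ hu.2.le hw.2.le
    (sum_sq_erase_zero_of_onH hu) (sum_sq_erase_zero_of_onH hw)
  rw [lprod]
  linarith [le_abs_self (∑ i ∈ univ.erase 0, u i * w i)]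

lemma onH_e1vec : onH (e1vec n) :=
  ⟨by rw [lprod_e1vec, e1vec, if_pos rfl], by simp [e1vec]⟩

lemma onH_cosh_smul_add_sinh_smul {j : Fin (n+1)} (hj : j ≠ 0) (t : ℝ) :
    onH (cosh t • Pi.single 0 1 + sinh t • Pi.single j 1) := by
  constructor
  · have h0j : lprod (Pi.single 0 1) (Pi.single j 1 : Fin (n+1) → ℝ) = 0 := by
      simp [lprod_single_zero_left, hj]
    simp only [lprod_add_left, lprod_add_right, lprod_smul_left, lprod_smul_right,
      lprod_single_zero_left, lprod_comm (Pi.single j 1) (Pi.single 0 1), h0j,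
      lprod_single_self hj]
    simp only [Pi.single_eq_same]
    linear_combination cosh_sq_sub_sinh_sq t
  · simp [hj.symm, cosh_pos]

lemma lprod_self_nonpos_of_lprod_eq_zero {v z : Fin (n+1) → ℝ} (hv : onH v)
    (hz : lprod v z = 0) : lprod z z ≤ 0 := by
  set S := ∑ i ∈ univ.erase 0, z i ^ 2
  have hS : 0 ≤ S := sum_nonneg fun i _ => sq_nonneg (z i)
  have hvz : v 0 * z 0 = ∑ i ∈ univ.erase 0, v i * z i := by rw [lprod] at hz; linarith
  have hcs : (v 0 * z 0) ^ 2 ≤ (v 0 ^ 2 - 1) * S := by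
    rw [hvz, ← sum_sq_erase_zero_of_onH hv]
    exact sum_mul_sq_le_sq_mul_sq _ v z
  have hzz : lprod z z = z 0 ^ 2 - S := by simp only [lprod, S, pow_two]
  rw [hzz]
  nlinarith [mul_pos hv.2 hv.2]

lemma sq_lprod_le_of_lprod_eq_zero {v p q : Fin (n+1) → ℝ} (hv : onH v)
    (hp : lprod v p = 0) (hq : lprod v q = 0) :
    lprod p q ^ 2 ≤ lprod p p * lprod q q := by
  have hquad : ∀ t : ℝ,
      0 ≤ -lprod q q * (t * t) + -(2 * lprod p q) * t + -lprod p p := fun t => by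
    have h := lprod_self_nonpos_of_lprod_eq_zero hv (z := p + t • q)
      (by simp [hp, hq])
    simp only [lprod_add_left, lprod_add_right, lprod_smul_left, lprod_smul_right,
      lprod_comm q p] at h
    linarith
  have := discrim_le_zero hquad
  rw [discrim] at this
  linarith

lemma lprod_le_cosh_add {u v w : Fin (n+1) → ℝ} (hu : onH u) (hv : onH v) (hw : onH w)
    {s t : ℝ} (hs : 0 ≤ s) (ht : 0 ≤ t)
    (huv : lprod u v ≤ cosh s) (hvw : lprod v w ≤ cosh t) :
    lprod u w ≤ cosh (s + t) := by
  set a := lprod u v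
  set b := lprod v w
  have ha : 1 ≤ a := one_le_lprod_of_onH hu hv
  have hb : 1 ≤ b := one_le_lprod_of_onH hv hw
  -- project `u` and `w` onto the orthogonal complement of `v`
  have hcs := sq_lprod_le_of_lprod_eq_zero hv (p := u - a • v) (q := w - b • v)
    (by simp [hv.1, lprod_comm v u, a]) (by simp [hv.1, b])
  simp only [lprod_sub_left, lprod_sub_right, lprod_smul_left, lprod_smul_right, hu.1, hv.1,
    hw.1, lprod_comm v u, lprod_comm w v] at hcs
  have ha' : a ^ 2 - 1 ≤ sinh s ^ 2 := by nlinarith [cosh_sq s]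
  have hb' : b ^ 2 - 1 ≤ sinh t ^ 2 := by nlinarith [cosh_sq t]
  have hsinh : 0 ≤ sinh s * sinh t :=
    mul_nonneg (sinh_nonneg_iff.mpr hs) (sinh_nonneg_iff.mpr ht)
  have hdev : lprod u w - a * b ≤ sinh s * sinh t := by
    refine (abs_le_of_sq_le_sq ?_ hsinh).trans' (le_abs_self _)
    calc (lprod u w - a * b) ^ 2 ≤ (a ^ 2 - 1) * (b ^ 2 - 1) := by nlinarith
      _ ≤ (sinh s * sinh t) ^ 2 := by
        rw [mul_pow]; exact mul_le_mul ha' hb' (by nlinarith) (sq_nonneg _)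
  have hab : a * b ≤ cosh s * cosh t := mul_le_mul huv hvw (by linarith) (cosh_pos s).le
  rw [cosh_add]
  linarith

end Hyperboloid

section LorentzGroup

variable {n : ℕ} {A : Matrix (Fin (n+1)) (Fin (n+1)) ℝ}

lemma Jmat_mul_self : Jmat n * Jmat n = 1 := by
  rw [Jmat, diagonal_mul_diagonal, ← diagonal_one]
  congr with i
  split_ifs <;> norm_num

lemma mul_Jmat_mul_transpose (hA : Aᵀ * Jmat n * A = Jmat n) : A * Jmat n * Aᵀ = Jmat n := by
  have hinv : A * (Jmat n * Aᵀ * Jmat n) = 1 :=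
    mul_eq_one_comm.mp <| by
      rw [Matrix.mul_assoc, Matrix.mul_assoc, ← Matrix.mul_assoc Aᵀ, hA, Jmat_mul_self]
  calc A * Jmat n * Aᵀ = A * (Jmat n * Aᵀ * Jmat n) * Jmat n := by
        simp only [Matrix.mul_assoc, Jmat_mul_self, Matrix.mul_one]
    _ = Jmat n := by rw [hinv, Matrix.one_mul]

lemma sum_sq_row_zero (hA : Aᵀ * Jmat n * A = Jmat n) :
    ∑ j ∈ univ.erase 0, A 0 j ^ 2 = A 0 0 ^ 2 - 1 := by
  have h := congr_fun₂ (mul_Jmat_mul_transpose hA) 0 0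
  have hrow : ∀ j ∈ univ.erase 0,
      A 0 j * (if j = 0 then (-1 : ℝ) else 1) * A 0 j = A 0 j ^ 2 := fun j hj => by
    rw [if_neg (mem_erase.mp hj).1, mul_one, pow_two]
  rw [Jmat, mul_apply, ← add_sum_erase _ _ (mem_univ 0)] at h
  simp only [mul_diagonal, transpose_apply, diagonal_apply_eq, if_true] at h
  rw [sum_congr rfl hrow] at h
  linear_combination h

lemma mulVec_apply_zero (x : Fin (n+1) → ℝ) :
    (A *ᵥ x) 0 = A 0 0 * x 0 + ∑ j ∈ univ.erase 0, A 0 j * x j := by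
  rw [mulVec, dotProduct, ← add_sum_erase _ _ (mem_univ 0)]

lemma onH_mulVec (hA : OPlus A) {x : Fin (n+1) → ℝ} (hx : onH x) : onH (A *ᵥ x) := by
  refine ⟨by rw [lprod_mulVec hA.1, hx.1], ?_⟩
  have := abs_sum_mul_le_mul_sub_one _ (by linarith [hA.2]) hx.2.le (sum_sq_row_zero hA.1)
    (sum_sq_erase_zero_of_onH hx)
  rw [mulVec_apply_zero]
  linarith [neg_abs_le (∑ j ∈ univ.erase 0, A 0 j * x j)]

end LorentzGroup

section Ball

variable {n : ℕ} {r : ℝ}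

lemma apply_zero_le_cosh_of_mem_hBall {x : Fin (n+1) → ℝ} (hx : x ∈ hBall n r) :
    x 0 ≤ cosh r := by
  obtain ⟨hxH, hxr⟩ := hx
  have h1 : 1 ≤ x 0 := lprod_e1vec x ▸ one_le_lprod_of_onH onH_e1vec hxH
  have hd : dH (e1vec n) x = Real.arcosh (x 0) := by rw [dH, lprod_e1vec]; rfl
  rw [hd] at hxr
  have h0 := arcosh_nonneg h1
  calc x 0 = cosh (Real.arcosh (x 0)) := (cosh_arcosh h1).symm
    _ ≤ cosh r := cosh_le_cosh.mpr <| by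
      rwa [abs_of_nonneg h0, abs_of_nonneg (h0.trans hxr)]

variable {A : Matrix (Fin (n+1)) (Fin (n+1)) ℝ} {x : Fin (n+1) → ℝ}

lemma apply_zero_mulVec_le_cosh_three_mul (hA : OPlus A) (hr : 0 ≤ r) (hx : x ∈ hBall n r)
    (hAx : A *ᵥ x ∈ hBall n r) {p : Fin (n+1) → ℝ} (hp : onH p) (hpr : p 0 ≤ cosh r) :
    (A *ᵥ p) 0 ≤ cosh (3 * r) := by
  have hxp : lprod x p ≤ cosh (r + r) := by
    refine lprod_le_cosh_add hx.1 onH_e1vec hp hr hr ?_ (by rwa [lprod_e1vec])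
    rw [lprod_comm, lprod_e1vec]
    exact apply_zero_le_cosh_of_mem_hBall hx
  have h := lprod_le_cosh_add onH_e1vec hAx.1 (onH_mulVec hA hp) hr (add_nonneg hr hr)
    (by rw [lprod_e1vec]; exact apply_zero_le_cosh_of_mem_hBall hAx)
    (by rwa [lprod_mulVec hA.1])
  rw [lprod_e1vec] at h
  convert h using 2
  ring

lemma sinh_mul_abs_apply_le (hA : OPlus A) (hr : 0 ≤ r) (hx : x ∈ hBall n r)
    (hAx : A *ᵥ x ∈ hBall n r) (i j : Fin (n+1)) :
    sinh r * |A i j| ≤ (1 + cosh r) * cosh (3 * r) := by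
  have hbound : ∀ {p}, onH p → p 0 ≤ cosh r → |(A *ᵥ p) i| ≤ cosh (3 * r) := fun hp hpr =>
    (abs_apply_le_apply_zero_of_onH (onH_mulVec hA hp) i).trans
      (apply_zero_mulVec_le_cosh_three_mul hA hr hx hAx hp hpr)
  have hcol : |A i 0| ≤ cosh (3 * r) := by
    simpa [e1vec_eq_single] using hbound onH_e1vec (by simp [e1vec_eq_single, one_le_cosh])
  rcases eq_or_ne j 0 with rfl | hj
  · exact mul_le_mul (by linarith [sinh_lt_cosh r]) hcol (abs_nonneg _) (by positivity)
  · -- test the bound on the point at distance `r` from `e₁` in the direction of `e_j`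
    set p : Fin (n+1) → ℝ := cosh r • Pi.single 0 1 + sinh r • Pi.single j 1
    have hAp : (A *ᵥ p) i = cosh r * A i 0 + sinh r * A i j := by
      simp [p, mulVec_add, mulVec_smul]
    have hpi := hbound (onH_cosh_smul_add_sinh_smul hj r) (by simp [hj.symm])
    rw [hAp] at hpi
    calc sinh r * |A i j| = |(cosh r * A i 0 + sinh r * A i j) - cosh r * A i 0| := by
          rw [add_sub_cancel_left, abs_mul, abs_of_nonneg (sinh_nonneg_iff.mpr hr)]
      _ ≤ |cosh r * A i 0 + sinh r * A i j| + |cosh r * A i 0| := abs_sub _ _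
      _ ≤ (1 + cosh r) * cosh (3 * r) := by
          rw [abs_mul, abs_of_pos (cosh_pos r)]
          nlinarith [mul_le_mul_of_nonneg_left hcol (cosh_pos r).le]

end Ball

lemma cosh_le_sqrt_cosh_two_mul (x : ℝ) : cosh x ≤ √(cosh (2 * x)) :=
  (le_sqrt' (cosh_pos x)).mpr <| by rw [cosh_two_mul]; nlinarith [sq_nonneg (sinh x)]

theorem stmt_14 (n : ℕ) (r : ℝ) (hr : 0 < r)
    (A : Matrix (Fin (n+1)) (Fin (n+1)) ℝ) (hA : OPlus A)
    (hmeet : ∃ x ∈ hBall n r, A.mulVec x ∈ hBall n r) :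
    ∀ i j, |A i j| ≤ kappa r := by
  obtain ⟨x, hx, hAx⟩ := hmeet
  intro i j
  have hcosh : cosh (3 * r) ≤ √(cosh (6 * r)) := by
    rw [show 6 * r = 2 * (3 * r) by ring]
    exact cosh_le_sqrt_cosh_two_mul _
  rw [kappa, div_mul_eq_mul_div, le_div_iff₀ (sinh_pos_iff.mpr hr), mul_comm]
  exact (sinh_mul_abs_apply_le hA hr.le hx hAx i j).trans
    (mul_le_mul_of_nonneg_left hcosh (by positivity))
end
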